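/- arXiv:1711.05029 — 2 statements merged into one kernel-verified Lean document; each statement's English description precedes it below -/
import Mathlib

section
/- Assume the first-moment condition ∑_{n≥0} (n+1)(|a_n - 1/2| + |b_n|) < ∞, and let ε ∈ {1, -1}. If u = (u_n)_{n≥-1} is a solution of the Jacobi equation at spectral parameter z = ε such that u_n → 0 as n → ∞, then u_n = 0 for all n. In particular, the points 1 and -1 cannot be eigenvalues of the Jacobi operator. -/
/-!
At `z = 1` the Jacobi equation says that the second differences of `u` are `-2 (V u)`, where `V`
is the perturbation of the free operator (`a ≡ 1/2`, `b ≡ 0`); the case `z = -1` reduces to it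
through `u_n ↦ (-1)^n u_n`, `b ↦ -b`. A sequence tending to `0` whose second differences `f`
have a finite first moment is recovered from them as `u_m = ∑_{k ≥ 0} (k + 1) f_{m+k}`.
As `|(V u)_{n+1}|` is at most the size of the coefficients near `n` times `sup_{j ≥ n} |u_j|`,
this gives `sup_{j ≥ m} |u_j| ≤ 2 τ_m sup_{j ≥ m} |u_j|`, where `τ_m → 0` is a tail of the
first-moment series; hence `u` vanishes eventually, and since `a_n > 0` the recursion carries
the zeros back down to `n = -1`.
-/

open Filter Finset MeasureTheory

noncomputable section

/-- Extended coefficient sequence with `a₋₁ = 1/2`. -/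
def aext (a : ℕ → ℝ) : ℤ → ℝ := fun k => if k < 0 then 1/2 else a k.toNat

/-- `u : ℤ → ℂ` (restricted to indices `n ≥ -1`) solves the Jacobi equation
`a_{n-1} u_{n-1} + b_n u_n + a_n u_{n+1} = z u_n` for all `n ≥ 0`, with `a_{-1} = 1/2`. -/
def IsJacobiSol (a b : ℕ → ℝ) (z : ℂ) (u : ℤ → ℂ) : Prop :=
  ∀ n : ℕ, (aext a ((n : ℤ) - 1) : ℂ) * u ((n : ℤ) - 1) + (b n : ℂ) * u (n : ℤ)
      + (a n : ℂ) * u ((n : ℤ) + 1) = z * u (n : ℤ)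

/-- The perturbation `V = H - H₀` applied to a sequence:
`(Vf)_m = (a_{m-1} - 1/2) f_{m-1} + b_m f_m + (a_m - 1/2) f_{m+1}` with `a_{-1} = 1/2`. -/
def jV (a b : ℕ → ℝ) (f : ℤ → ℂ) (m : ℕ) : ℂ :=
  ((aext a ((m : ℤ) - 1) - 1/2 : ℝ) : ℂ) * f ((m : ℤ) - 1) + (b m : ℂ) * f (m : ℤ)
    + ((a m - 1/2 : ℝ) : ℂ) * f ((m : ℤ) + 1)

open Topology

section SecondDifference

variable {E : Type*} [SeminormedAddCommGroup E]

theorem hasSum_nat_add_of_sub_eq {d f : ℕ → E} (hd : Tendsto d atTop (𝓝 0))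
    (hf : Summable fun n => ‖f n‖) (h : ∀ n, d (n + 1) - d n = f n) (n : ℕ) :
    HasSum (fun k => f (k + n)) (-d n) := by
  rw [hasSum_iff_tendsto_nat_of_summable_norm ((summable_nat_add_iff (f := fun k => ‖f k‖) n).2 hf)]
  have hpartial : ∀ K, ∑ k ∈ range K, f (k + n) = d (K + n) - d n := fun K => by
    simpa only [add_right_comm _ 1 n, h, zero_add] using Finset.sum_range_sub (fun k => d (k + n)) K
  simp only [hpartial]
  simpa using (hd.comp (tendsto_add_atTop_nat n)).sub_const (d n)

variable {u f : ℕ → E}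

theorem tendsto_mul_norm_sub_of_second_diff_eq (hu : Tendsto u atTop (𝓝 0))
    (hf : Summable fun n : ℕ => ((n : ℝ) + 1) * ‖f n‖)
    (h : ∀ n, u (n + 2) - 2 • u (n + 1) + u n = f n) :
    Tendsto (fun n : ℕ => (n : ℝ) * ‖u (n + 1) - u n‖) atTop (𝓝 0) := by
  have hfn : Summable fun n => ‖f n‖ :=
    hf.of_nonneg_of_le (fun _ => norm_nonneg _) fun n => by
      nlinarith [norm_nonneg (f n), (n.cast_nonneg : (0 : ℝ) ≤ n)]
  have hd : Tendsto (fun n => u (n + 1) - u n) atTop (𝓝 0) := by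
    simpa using (hu.comp (tendsto_add_atTop_nat 1)).sub hu
  have hdiff : ∀ n, (u (n + 1 + 1) - u (n + 1)) - (u (n + 1) - u n) = f n := fun n => by
    rw [← h, two_nsmul]; abel
  have hle : ∀ n : ℕ, (n : ℝ) * ‖u (n + 1) - u n‖ ≤
      ∑' k : ℕ, (((k + n : ℕ) : ℝ) + 1) * ‖f (k + n)‖ := by
    intro n
    have hshift : Summable fun k => ‖f (k + n)‖ :=
      (summable_nat_add_iff (f := fun k => ‖f k‖) n).2 hfn
    have htail : ‖u (n + 1) - u n‖ ≤ ∑' k : ℕ, ‖f (k + n)‖ := by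
      simpa [norm_sub_rev] using (hasSum_nat_add_of_sub_eq hd hfn hdiff n).norm_le_of_bounded
        hshift.hasSum fun k => le_rfl
    calc (n : ℝ) * ‖u (n + 1) - u n‖ ≤ n * ∑' k : ℕ, ‖f (k + n)‖ := by gcongr
      _ = ∑' k, n * ‖f (k + n)‖ := tsum_mul_left.symm
      _ ≤ ∑' k, (((k + n : ℕ) : ℝ) + 1) * ‖f (k + n)‖ := by
        refine (hshift.mul_left _).tsum_le_tsum (fun k => ?_)
          ((summable_nat_add_iff (f := fun k : ℕ => ((k : ℝ) + 1) * ‖f k‖) n).2 hf)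
        gcongr
        push_cast
        linarith [(k.cast_nonneg : (0 : ℝ) ≤ k)]
  exact squeeze_zero (fun n => by positivity) hle
    (tendsto_sum_nat_add fun k : ℕ => ((k : ℝ) + 1) * ‖f k‖)

theorem hasSum_nsmul_of_second_diff_eq (hu : Tendsto u atTop (𝓝 0))
    (hf : Summable fun n : ℕ => ((n : ℝ) + 1) * ‖f n‖)
    (h : ∀ n, u (n + 2) - 2 • u (n + 1) + u n = f n) :
    HasSum (fun k => (k + 1) • f k) (u 0) := by
  have hnorm : Summable fun k => ‖(k + 1) • f k‖ :=
    hf.of_nonneg_of_le (fun _ => norm_nonneg _) fun k => by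
      simpa using norm_nsmul_le (n := k + 1) (a := f k)
  rw [hasSum_iff_tendsto_nat_of_summable_norm hnorm]
  have hpartial : ∀ N, ∑ k ∈ range N, (k + 1) • f k = u 0 - u N + N • (u (N + 1) - u N) := by
    intro N
    induction N with
    | zero => simp
    | succ N ih =>
      rw [sum_range_succ, ih, ← h]
      module
  simp only [hpartial]
  have hlast : Tendsto (fun N : ℕ => N • (u (N + 1) - u N)) atTop (𝓝 0) :=
    squeeze_zero_norm (fun N => norm_nsmul_le) (tendsto_mul_norm_sub_of_second_diff_eq hu hf h)
  simpa using (hu.const_sub (u 0)).add hlast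

theorem norm_le_tsum_of_second_diff_eq (hu : Tendsto u atTop (𝓝 0))
    (hf : Summable fun n : ℕ => ((n : ℝ) + 1) * ‖f n‖)
    (h : ∀ n, u (n + 2) - 2 • u (n + 1) + u n = f n) (m : ℕ) :
    ‖u m‖ ≤ ∑' k : ℕ, ((k : ℝ) + 1) * ‖f (k + m)‖ := by
  have hf' : Summable fun k : ℕ => ((k : ℝ) + 1) * ‖f (k + m)‖ := by
    refine ((summable_nat_add_iff (f := fun k : ℕ => ((k : ℝ) + 1) * ‖f k‖) m).2 hf).of_nonneg_of_le
      (fun _ => by positivity) fun k => ?_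
    gcongr
    linarith [(m.cast_nonneg : (0 : ℝ) ≤ m)]
  have hsum := hasSum_nsmul_of_second_diff_eq (u := fun n => u (n + m)) (f := fun n => f (n + m))
    ((tendsto_add_atTop_iff_nat m).2 hu) hf' fun n => by simpa only [add_right_comm] using h (n + m)
  simpa using hsum.norm_le_of_bounded hf'.hasSum fun k => by
    simpa using norm_nsmul_le (n := k + 1) (a := f (k + m))

end SecondDifference

lemma nonpos_of_le_half_of_bddAbove {x : ℕ → ℝ} (hbdd : BddAbove (Set.range x))
    (h : ∀ B, (∀ j, x j ≤ B) → ∀ m, x m ≤ B / 2) (n : ℕ) : x n ≤ 0 := by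
  have hsup : ⨆ j, x j ≤ (⨆ j, x j) / 2 := ciSup_le (h _ fun j => le_ciSup hbdd j)
  linarith [le_ciSup hbdd n]

lemma aext_natCast (a : ℕ → ℝ) (n : ℕ) : aext a n = a n := by simp [aext]

lemma aext_pos {a : ℕ → ℝ} (ha : ∀ n, 0 < a n) (k : ℤ) : 0 < aext a k := by
  unfold aext
  split
  · norm_num
  · exact ha _

lemma jV_succ (a b : ℕ → ℝ) (u : ℤ → ℂ) (n : ℕ) :
    jV a b u (n + 1) = ((a n - 1/2 : ℝ) : ℂ) * u n + (b (n + 1) : ℂ) * u (n + 1 : ℕ)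
      + ((a (n + 1) - 1/2 : ℝ) : ℂ) * u (n + 2 : ℕ) := by
  simp only [jV, Nat.cast_add, Nat.cast_one, Nat.cast_ofNat, add_sub_cancel_right, aext_natCast,
    add_assoc, one_add_one_eq_two]

lemma IsJacobiSol.second_diff {a b : ℕ → ℝ} {u : ℤ → ℂ} (hu : IsJacobiSol a b 1 u) (n : ℕ) :
    u (n + 2 : ℕ) - 2 • u (n + 1 : ℕ) + u n = -2 * jV a b u (n + 1) := by
  have h := hu (n + 1)
  simp only [Nat.cast_add, Nat.cast_one, add_sub_cancel_right, aext_natCast, add_assoc,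
    one_add_one_eq_two] at h
  rw [jV_succ]
  push_cast at h ⊢
  linear_combination 2 * h

def firstMoment (a b : ℕ → ℝ) (n : ℕ) : ℝ := ((n : ℝ) + 1) * (|a n - 1/2| + |b n|)

lemma firstMoment_neg (a b : ℕ → ℝ) : firstMoment a (-b) = firstMoment a b := by
  ext n
  simp [firstMoment]

lemma norm_jV_succ_le (a b : ℕ → ℝ) {u : ℤ → ℂ} {n : ℕ} {B : ℝ} (h₀ : ‖u n‖ ≤ B)
    (h₁ : ‖u (n + 1 : ℕ)‖ ≤ B) (h₂ : ‖u (n + 2 : ℕ)‖ ≤ B) :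
    ‖jV a b u (n + 1)‖ ≤ (|a n - 1/2| + |b (n + 1)| + |a (n + 1) - 1/2|) * B := by
  rw [jV_succ, add_mul, add_mul]
  refine norm_add₃_le.trans ?_
  simp only [norm_mul, Complex.norm_real, Real.norm_eq_abs]
  gcongr

lemma mul_norm_jV_succ_le (a b : ℕ → ℝ) {u : ℤ → ℂ} {n : ℕ} {B : ℝ} (h₀ : ‖u n‖ ≤ B)
    (h₁ : ‖u (n + 1 : ℕ)‖ ≤ B) (h₂ : ‖u (n + 2 : ℕ)‖ ≤ B) {k : ℕ} (hk : k ≤ n) :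
    ((k : ℝ) + 1) * ‖jV a b u (n + 1)‖ ≤ B * (firstMoment a b n + firstMoment a b (n + 1)) := by
  have hB : 0 ≤ B := (norm_nonneg _).trans h₀
  have hkn : (k : ℝ) + 1 ≤ n + 1 := by gcongr
  calc ((k : ℝ) + 1) * ‖jV a b u (n + 1)‖
      ≤ (n + 1) * ((|a n - 1/2| + |b (n + 1)| + |a (n + 1) - 1/2|) * B) := by
        gcongr
        exact norm_jV_succ_le a b h₀ h₁ h₂
    _ ≤ B * (firstMoment a b n + firstMoment a b (n + 1)) := by
        simp only [firstMoment, Nat.cast_add, Nat.cast_one]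
        nlinarith [mul_nonneg hB (abs_nonneg (b n)), mul_nonneg hB (abs_nonneg (b (n + 1))),
          mul_nonneg hB (abs_nonneg (a (n + 1) - 1/2)), (n.cast_nonneg : (0 : ℝ) ≤ n)]

lemma IsJacobiSol.eq_zero_of_forall_ge {a b : ℕ → ℝ} {z : ℂ} {u : ℤ → ℂ} (ha : ∀ n, 0 < a n)
    (hu : IsJacobiSol a b z u) {m : ℕ} (h : ∀ n : ℕ, m ≤ n → u n = 0) :
    ∀ n : ℤ, -1 ≤ n → u n = 0 := by
  have hstep : ∀ n : ℤ, -1 ≤ n → u (n + 1) = 0 → u (n + 1 + 1) = 0 → u n = 0 := by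
    intro n hn h₁ h₂
    have hn' := hu (n + 1).toNat
    rw [Int.toNat_of_nonneg (by omega), add_sub_cancel_right, h₁, h₂] at hn'
    simpa [(aext_pos ha n).ne'] using hn'
  have hback : ∀ k : ℕ, ∀ n : ℤ, -1 ≤ n → (m : ℤ) ≤ n + k → u n = 0 := by
    intro k
    induction k with
    | zero =>
      intro n _ hmn
      simpa [Int.toNat_of_nonneg (by omega : 0 ≤ n)] using h n.toNat (by omega)
    | succ k ih =>
      intro n hn hmn
      exact hstep n hn (ih _ (by omega) (by push_cast at hmn; omega))
        (ih _ (by omega) (by push_cast at hmn; omega))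
  intro n hn
  exact hback (m + 1) n hn (by push_cast; omega)

lemma IsJacobiSol.alternating {a b : ℕ → ℝ} {u : ℤ → ℂ} (hu : IsJacobiSol a b (-1) u) :
    IsJacobiSol a (-b) 1 (fun k => (-1) ^ k * u k) := by
  intro n
  have hsub : (-1 : ℂ) ^ ((n : ℤ) - 1) = -(-1) ^ (n : ℤ) := by
    rw [zpow_sub_one₀ (by norm_num), inv_neg, inv_one, mul_neg_one]
  have hadd : (-1 : ℂ) ^ ((n : ℤ) + 1) = -(-1) ^ (n : ℤ) := by
    rw [zpow_add_one₀ (by norm_num), mul_neg_one]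
  simp only [hsub, hadd, Pi.neg_apply, Complex.ofReal_neg]
  linear_combination (-(-1 : ℂ) ^ (n : ℤ)) * hu n

lemma IsJacobiSol.norm_le_of_forall_ge_le {a b : ℕ → ℝ} {u : ℤ → ℂ}
    (hm : Summable (firstMoment a b)) (hu : IsJacobiSol a b 1 u)
    (hdecay : Tendsto (fun n : ℕ => u n) atTop (𝓝 0)) {m : ℕ} {B : ℝ}
    (hB : ∀ j : ℕ, m ≤ j → ‖u j‖ ≤ B) :
    ‖u m‖ ≤ 2 * B * ∑' k, (firstMoment a b (k + m) + firstMoment a b (k + m + 1)) := by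
  set f : ℕ → ℂ := fun n => -2 * jV a b u (n + 1)
  set M : ℕ → ℝ := fun n => firstMoment a b n + firstMoment a b (n + 1)
  have hM : Summable M := hm.add ((summable_nat_add_iff 1).2 hm)
  have hfM : ∀ D p, (∀ j : ℕ, p ≤ j → ‖u j‖ ≤ D) →
      ∀ k : ℕ, ((k : ℝ) + 1) * ‖f (k + p)‖ ≤ 2 * D * M (k + p) := by
    intro D p hD k
    have := mul_norm_jV_succ_le a b (hD _ le_add_self) (hD (k + p + 1) (by omega))
      (hD (k + p + 2) (by omega)) (le_add_right le_rfl : k ≤ k + p)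
    simp only [f, M, norm_mul, norm_neg, Complex.norm_ofNat]
    linarith
  have hfsum : ∀ D p, (∀ j : ℕ, p ≤ j → ‖u j‖ ≤ D) →
      Summable fun k : ℕ => ((k : ℝ) + 1) * ‖f (k + p)‖ := fun D p hD =>
    (((summable_nat_add_iff p).2 hM).mul_left (2 * D)).of_nonneg_of_le (fun _ => by positivity)
      (hfM D p hD)
  obtain ⟨C, hC⟩ := hdecay.norm.bddAbove_range
  rw [← tsum_mul_left]
  exact (norm_le_tsum_of_second_diff_eq hdecay (hfsum C 0 fun j _ => hC ⟨j, rfl⟩)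
    hu.second_diff m).trans ((hfsum B m hB).tsum_le_tsum (hfM B m hB)
      (((summable_nat_add_iff m).2 hM).mul_left _))

theorem IsJacobiSol.eq_zero_of_tendsto_zero_of_one {a b : ℕ → ℝ} {u : ℤ → ℂ}
    (ha : ∀ n, 0 < a n) (hm : Summable (firstMoment a b)) (hu : IsJacobiSol a b 1 u)
    (hdecay : Tendsto (fun n : ℕ => u n) atTop (𝓝 0)) : ∀ n : ℤ, -1 ≤ n → u n = 0 := by
  obtain ⟨m₀, hm₀⟩ := eventually_atTop.1
    ((tendsto_sum_nat_add fun n => firstMoment a b n + firstMoment a b (n + 1)).eventually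
      (ge_mem_nhds (by norm_num : (0 : ℝ) < 1/4)))
  have hbdd : BddAbove (Set.range fun j : ℕ => ‖u (j + m₀ : ℕ)‖) :=
    (hdecay.comp (tendsto_add_atTop_nat m₀)).norm.bddAbove_range
  have hhalf : ∀ B, (∀ j : ℕ, ‖u (j + m₀ : ℕ)‖ ≤ B) → ∀ m : ℕ, ‖u (m + m₀ : ℕ)‖ ≤ B / 2 := by
    intro B hB m
    have hB0 : 0 ≤ B := (norm_nonneg _).trans (hB 0)
    have := hu.norm_le_of_forall_ge_le hm hdecay (m := m + m₀) (B := B) fun j hj => by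
      simpa [Nat.sub_add_cancel (by omega : m₀ ≤ j)] using hB (j - m₀)
    nlinarith [hm₀ (m + m₀) le_add_self]
  refine hu.eq_zero_of_forall_ge ha (m := m₀) fun n hn => norm_le_zero_iff.1 ?_
  simpa [Nat.sub_add_cancel hn] using nonpos_of_le_half_of_bddAbove hbdd hhalf (n - m₀)

/-- under the first-moment condition the Jacobi equation at `z = ±1`
has no nontrivial solution tending to zero; in particular `±1` are not eigenvalues. -/
theorem no_edge_eigenvalues
    (a b : ℕ → ℝ) (ha : ∀ n, 0 < a n)
    (hm : Summable (fun n : ℕ => ((n : ℝ) + 1) * (|a n - 1/2| + |b n|)))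
    (ε : ℝ) (hε : ε = 1 ∨ ε = -1)
    (u : ℤ → ℂ) (hu : IsJacobiSol a b (ε : ℂ) u)
    (hdecay : Filter.Tendsto (fun n : ℕ => u (n : ℤ)) Filter.atTop (nhds 0)) :
    ∀ n : ℤ, -1 ≤ n → u n = 0 := by
  rcases hε with rfl | rfl
  · exact IsJacobiSol.eq_zero_of_tendsto_zero_of_one ha hm (by exact_mod_cast hu) hdecay
  · have hm' : Summable (firstMoment a (-b)) := by rwa [firstMoment_neg]
    have hdecay' : Tendsto (fun n : ℕ => (-1 : ℂ) ^ (n : ℤ) * u n) atTop (𝓝 0) := by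
      rw [tendsto_zero_iff_norm_tendsto_zero] at hdecay ⊢
      simpa using hdecay
    intro n hn
    refine (mul_eq_zero.1 ?_).resolve_left (zpow_ne_zero n (by norm_num : (-1 : ℂ) ≠ 0))
    exact IsJacobiSol.eq_zero_of_tendsto_zero_of_one ha hm'
      (IsJacobiSol.alternating (by exact_mod_cast hu)) hdecay' n hn
end
end

section
/- Assume the first-moment condition ∑_{n≥0} (n+1)(|a_n - 1/2| + |b_n|) < ∞, and let ε ∈ {1, -1}. Suppose Ω(ε) = 1 - 2 ∑_{n=0}^{∞} ε^{n+1} (VP(ε))_n = 0 (a resonance at z = ε). Then the sequence εⁿ P_n(ε) converges as n → ∞ to γ_ε = 1 + 2 ∑_{m=0}^{∞} ε^{m-1} m (VP(ε))_m, and γ_ε ≠ 0. -/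
open Filter Finset MeasureTheory

noncomputable section

/-!
With `qₙ = εⁿ Pₙ(ε)` and `ε² = 1`, the Jacobi equation becomes the free equation with a source,
`qₙ₊₁ - 2qₙ + qₙ₋₁ = cₙ`, where `cₙ = -2 εⁿ⁺¹ (VP)ₙ` and `|cₙ| ≤ vₙ (|qₙ₋₁| + |qₙ| + |qₙ₊₁|)` with
`∑ (n + 1) vₙ < ∞`. Summing once, `qₙ₊₁ - qₙ = 1 + ∑_{k ≤ n} cₖ`. Past an index beyond which the
tail of `∑ (k + 1) vₖ` is small, a bootstrap gives `|qₙ| = O(n)`, so `c` is summable, and the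
resonance `Ω(ε) = 1 + ∑ cₖ = 0` turns this into `qₙ₊₁ - qₙ = -∑_{k > n} cₖ`. A second bootstrap
(halving the slope of an affine bound) shows that `q` is bounded, so `∑ k |cₖ| < ∞` and
`qₙ = γ + ∑_{k > n} (k - n) cₖ → γ = 1 - ∑ k cₖ`. If `γ = 0`, this identity is a contraction on
a tail of `q`, which therefore vanishes there; since `aₙ > 0` the recursion can be run backwards,
giving `P₀ = 0`.
-/

open Topology

section Tails

variable {E : Type*} [NormedAddCommGroup E]

def tailSum (f : ℕ → E) (n : ℕ) : E := ∑' k, f (k + (n + 1))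

def momentTail (f : ℕ → E) (n : ℕ) : E := ∑' k, (k + 1) • f (k + (n + 1))

theorem tailSum_eq_add {f : ℕ → E} (hf : Summable f) (n : ℕ) :
    tailSum f n = f (n + 1) + tailSum f (n + 1) := by
  rw [tailSum, ((summable_nat_add_iff (n + 1)).2 hf).tsum_eq_zero_add, zero_add, tailSum]
  congr 1
  exact tsum_congr fun k => by rw [add_right_comm, add_assoc]

theorem sum_range_add_tailSum {f : ℕ → E} (hf : Summable f) (n : ℕ) :
    ∑ k ∈ range (n + 1), f k + tailSum f n = ∑' k, f k :=
  hf.sum_add_tsum_nat_add (n + 1)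

theorem tendsto_tailSum (f : ℕ → E) : Tendsto (tailSum f) atTop (𝓝 0) :=
  (tendsto_sum_nat_add f).comp (tendsto_add_atTop_nat 1)

theorem tailSum_add {f g : ℕ → E} (hf : Summable f) (hg : Summable g) (n : ℕ) :
    tailSum (fun k => f k + g k) n = tailSum f n + tailSum g n :=
  ((summable_nat_add_iff (n + 1)).2 hf).tsum_add ((summable_nat_add_iff (n + 1)).2 hg)

theorem tailSum_const_mul (a : ℝ) (f : ℕ → ℝ) (n : ℕ) :
    tailSum (fun k => a * f k) n = a * tailSum f n :=
  tsum_mul_left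

theorem exists_tailSum_le (f : ℕ → ℝ) {δ : ℝ} (hδ : 0 < δ) : ∃ N, tailSum f N ≤ δ :=
  ((tendsto_tailSum f).eventually (ge_mem_nhds hδ)).exists

theorem norm_tailSum_le {f : ℕ → E} {g : ℕ → ℝ} (hg : Summable g) {n : ℕ}
    (hfg : ∀ k, n < k → ‖f k‖ ≤ g k) : ‖tailSum f n‖ ≤ tailSum g n :=
  tsum_of_norm_bounded ((summable_nat_add_iff (n + 1)).2 hg).hasSum fun k => hfg _ (by omega)

theorem norm_momentTail_le {f : ℕ → E} {g : ℕ → ℝ}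
    (hg : Summable fun k : ℕ => ((k : ℝ) + 1) * g k) {n : ℕ} (hfg : ∀ k, n < k → ‖f k‖ ≤ g k) :
    ‖momentTail f n‖ ≤ tailSum (fun k : ℕ => ((k : ℝ) + 1) * g k) n := by
  refine tsum_of_norm_bounded ((summable_nat_add_iff (n + 1)).2 hg).hasSum fun k => ?_
  have hfk := hfg (k + (n + 1)) (by omega)
  have hg0 : 0 ≤ g (k + (n + 1)) := (norm_nonneg _).trans hfk
  calc ‖(k + 1) • f (k + (n + 1))‖ ≤ ((k + 1 : ℕ) : ℝ) * g (k + (n + 1)) :=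
        norm_nsmul_le.trans (by gcongr)
    _ ≤ _ := by push_cast; nlinarith [n.cast_nonneg (α := ℝ)]

variable {f : ℕ → E} (hf : Summable fun k : ℕ => ((k : ℝ) + 1) * ‖f k‖)
include hf

theorem tendsto_momentTail : Tendsto (momentTail f) atTop (𝓝 0) :=
  squeeze_zero_norm (fun _ => norm_momentTail_le hf fun _ _ => le_rfl) (tendsto_tailSum _)

variable [CompleteSpace E]

theorem summable_nsmul_nat_add_of_moment (n : ℕ) : Summable fun k => k • f (k + n) := by
  refine .of_norm_bounded ((summable_nat_add_iff n).2 hf) fun k => norm_nsmul_le.trans ?_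
  push_cast
  nlinarith [norm_nonneg (f (k + n)), n.cast_nonneg (α := ℝ)]

theorem summable_nat_add_of_moment (n : ℕ) : Summable fun k => f (k + n) := by
  refine .of_norm_bounded ((summable_nat_add_iff n).2 hf) fun k => ?_
  push_cast
  nlinarith [norm_nonneg (f (k + n)), n.cast_nonneg (α := ℝ), k.cast_nonneg (α := ℝ)]

theorem momentTail_eq_add (n : ℕ) :
    momentTail f n = tailSum f n + momentTail f (n + 1) := by
  simp only [momentTail, succ_nsmul]
  rw [(summable_nsmul_nat_add_of_moment hf _).tsum_add (summable_nat_add_of_moment hf _), add_comm,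
    (summable_nsmul_nat_add_of_moment hf _).tsum_eq_zero_add, zero_smul, zero_add]
  congr 1
  exact tsum_congr fun k => by rw [succ_nsmul, add_right_comm k 1 (n + 1), add_assoc]

theorem momentTail_zero : momentTail f 0 = ∑' k, k • f k := by
  have hsum : Summable fun k => k • f k := by simpa using summable_nsmul_nat_add_of_moment hf 0
  rw [hsum.tsum_eq_zero_add, zero_smul, zero_add, momentTail]

end Tails

section NonnegTails

variable {f : ℕ → ℝ} (hf0 : ∀ k, 0 ≤ f k)
include hf0

theorem tailSum_antitone (hf : Summable f) : Antitone (tailSum f) :=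
  antitone_nat_of_succ_le fun n => by
    rw [tailSum_eq_add hf n]
    linarith [hf0 (n + 1)]

theorem sum_Ico_le_tailSum (hf : Summable f) (N n : ℕ) :
    ∑ k ∈ Ico (N + 1) n, f k ≤ tailSum f N := by
  rw [sum_Ico_eq_sum_range, tailSum]
  simpa only [add_comm (N + 1)] using
    Summable.sum_le_tsum _ (fun k _ => hf0 _) ((summable_nat_add_iff (N + 1)).2 hf)

theorem sum_Ico_tailSum_le (hf : Summable fun k : ℕ => ((k : ℝ) + 1) * f k) {N n : ℕ}
    (hNn : N ≤ n) : ∑ j ∈ Ico N n, tailSum f j ≤ tailSum (fun k => ((k : ℝ) + 1) * f k) N := by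
  have hf' : Summable fun k : ℕ => ((k : ℝ) + 1) * ‖f k‖ := by
    simpa only [Real.norm_of_nonneg (hf0 _)] using hf
  have htelescope : ∑ j ∈ Ico N n, tailSum f j = momentTail f N - momentTail f n := by
    rw [← neg_sub, ← sum_Ico_sub _ hNn, ← sum_neg_distrib]
    exact sum_congr rfl fun j _ => by rw [momentTail_eq_add hf' j]; ring
  have hmoment_nonneg : 0 ≤ momentTail f n :=
    tsum_nonneg fun k => nsmul_nonneg (hf0 _) _
  have hmoment_le := norm_momentTail_le (f := f) hf (n := N) fun k _ =>
    (Real.norm_of_nonneg (hf0 k)).le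
  rw [htelescope]
  linarith [le_abs_self (momentTail f N), Real.norm_eq_abs (momentTail f N)]

end NonnegTails

theorem le_div_one_sub_of_forall_le_add_mul {x : ℕ → ℝ} {A θ : ℝ} {N : ℕ} (hA : 0 ≤ A) (hθ : θ < 1)
    (h : ∀ n, N ≤ n → ∀ C, 0 ≤ C → (∀ l, N ≤ l → l ≤ n → x l ≤ C) → x n ≤ A + θ * C)
    (n : ℕ) (hn : N ≤ n) : x n ≤ A / (1 - θ) := by
  induction n using Nat.strong_induction_on with
  | _ n ih =>
  have hθ' : 0 < 1 - θ := by linarith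
  rw [le_div_iff₀ hθ']
  by_contra! hlt
  have hC : A / (1 - θ) < x n := by rwa [div_lt_iff₀ hθ']
  have hwindow : ∀ l, N ≤ l → l ≤ n → x l ≤ x n := fun l hl hln => by
    rcases hln.lt_or_eq with hln | rfl
    · exact (ih l hln hl).trans hC.le
    · exact le_rfl
  have := h n hn (x n) ((div_nonneg hA hθ'.le).trans hC.le) hwindow
  linarith

theorem le_of_forall_le_add_mul_of_halving {ι : Type*} {x w : ι → ℝ} {B s : ℝ} (hs : 0 ≤ s)
    (h₀ : ∀ i, x i ≤ B + s * w i)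
    (hhalf : ∀ t, 0 ≤ t → (∀ i, x i ≤ B + t * w i) → ∀ i, x i ≤ B + t / 2 * w i) (i : ι) :
    x i ≤ B := by
  have hiter : ∀ m : ℕ, ∀ i, x i ≤ B + s / 2 ^ m * w i := by
    intro m
    induction m with
    | zero => simpa using h₀
    | succ m ih => simpa only [pow_succ, div_div] using hhalf _ (by positivity) ih
  have hlim : Tendsto (fun m : ℕ => B + s / 2 ^ m * w i) atTop (𝓝 B) := by
    simpa using tendsto_const_nhds.add
      ((tendsto_const_nhds.div_atTop (tendsto_pow_atTop_atTop_of_one_lt one_lt_two)).mul_const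
        (w i))
  exact ge_of_tendsto' hlim fun m => hiter m i

/-- The discrete analogue of `q'' = c` with `|c| ≤ v |q|` and `∫ (x + 1) v(x) dx < ∞`. -/
structure IsAlmostLinear {E : Type*} [NormedAddCommGroup E] (q c : ℕ → E) (v : ℕ → ℝ) (d : E) :
    Prop where
  nonneg : ∀ k, 0 ≤ v k
  summable_moment : Summable fun k : ℕ => ((k : ℝ) + 1) * v k
  norm_le : ∀ k, ‖c k‖ ≤ v k * (‖q (k - 1)‖ + ‖q k‖ + ‖q (k + 1)‖)
  sub_eq : ∀ n, q (n + 1) - q n = d + ∑ k ∈ range (n + 1), c k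

namespace IsAlmostLinear

variable {E : Type*} [NormedAddCommGroup E] {q c : ℕ → E} {v : ℕ → ℝ} {d : E}
  (h : IsAlmostLinear q c v d)
include h

theorem moment_nonneg (k : ℕ) : 0 ≤ ((k : ℝ) + 1) * v k :=
  mul_nonneg (by positivity) (h.nonneg k)

theorem norm_le_of_window {k : ℕ} {B t : ℝ} (ht : 0 ≤ t)
    (hq : ∀ l, k - 1 ≤ l → l ≤ k + 1 → ‖q l‖ ≤ B + t * (l + 1)) :
    ‖c k‖ ≤ 3 * B * v k + 6 * t * (((k : ℝ) + 1) * v k) := by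
  have hq' : ∀ l, k - 1 ≤ l → l ≤ k + 1 → ‖q l‖ ≤ B + t * (k + 2) := fun l hl hl' => by
    have hlk : (l : ℝ) ≤ k + 1 := by exact_mod_cast hl'
    have : t * ((l : ℝ) + 1) ≤ t * (k + 2) := mul_le_mul_of_nonneg_left (by linarith) ht
    linarith [hq l hl hl']
  have h₁ := hq' (k - 1) le_rfl (by omega)
  have h₂ := hq' k (by omega) (by omega)
  have h₃ := hq' (k + 1) (by omega) le_rfl
  nlinarith [h.norm_le k, h.nonneg k, mul_nonneg (mul_nonneg ht (h.nonneg k)) k.cast_nonneg]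

theorem norm_le_add_mul {N n : ℕ} (hn : N ≤ n) :
    ‖q n‖ ≤ ‖q N‖ + ((n : ℝ) - N) * (‖q (N + 1) - q N‖ + ∑ k ∈ Ico (N + 1) n, ‖c k‖) := by
  induction n, hn using Nat.le_induction with
  | base => simp
  | succ n hn ih =>
    have hdiff : q (n + 1) - q n = (q (N + 1) - q N) + ∑ k ∈ Ico (N + 1) (n + 1), c k := by
      rw [h.sub_eq, h.sub_eq, sum_Ico_eq_sub _ (by omega)]
      abel
    have hdiff_le : ‖q (n + 1) - q n‖ ≤ ‖q (N + 1) - q N‖ + ∑ k ∈ Ico (N + 1) (n + 1), ‖c k‖ := by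
      rw [hdiff]
      exact (norm_add_le _ _).trans (add_le_add_right (norm_sum_le _ _) _)
    have hmono : ∑ k ∈ Ico (N + 1) n, ‖c k‖ ≤ ∑ k ∈ Ico (N + 1) (n + 1), ‖c k‖ :=
      sum_le_sum_of_subset_of_nonneg (Ico_subset_Ico_right (by omega)) fun _ _ _ => norm_nonneg _
    have hnN : (0 : ℝ) ≤ n - N := by rw [sub_nonneg]; exact_mod_cast hn
    have := norm_le_norm_add_norm_sub' (q (n + 1)) (q n)
    push_cast
    nlinarith [mul_le_mul_of_nonneg_left hmono hnN]

theorem norm_div_succ_le_of_window {N : ℕ}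
    (hN : tailSum (fun k : ℕ => ((k : ℝ) + 1) * v k) N ≤ 1 / 12) {n : ℕ} (hn : N ≤ n) {C : ℝ}
    (hC : 0 ≤ C) (hwin : ∀ l, N ≤ l → l ≤ n → ‖q l‖ / (l + 1) ≤ C) :
    ‖q n‖ / (n + 1) ≤ ‖q N‖ + ‖q (N + 1) - q N‖ + 1 / 2 * C := by
  have hc : ∀ k ∈ Ico (N + 1) n, ‖c k‖ ≤ 6 * C * (((k : ℝ) + 1) * v k) := by
    intro k hk
    rw [mem_Ico] at hk
    have hk' := h.norm_le_of_window (k := k) (B := 0) hC fun l hl hl' => by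
      have hql := hwin l (by omega) (by omega)
      rwa [zero_add, ← div_le_iff₀ (by positivity)]
    linarith [h.nonneg k]
  have hsum : ∑ k ∈ Ico (N + 1) n, ‖c k‖ ≤ C / 2 :=
    calc ∑ k ∈ Ico (N + 1) n, ‖c k‖ ≤ ∑ k ∈ Ico (N + 1) n, 6 * C * (((k : ℝ) + 1) * v k) :=
          sum_le_sum hc
      _ = 6 * C * ∑ k ∈ Ico (N + 1) n, ((k : ℝ) + 1) * v k := (mul_sum _ _ _).symm
      _ ≤ 6 * C * (1 / 12) := by
          gcongr
          exact (sum_Ico_le_tailSum h.moment_nonneg h.summable_moment N n).trans hN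
      _ = C / 2 := by ring
  have hnN : (n : ℝ) - N ≤ n + 1 := by linarith [N.cast_nonneg (α := ℝ)]
  have hnN' : (0 : ℝ) ≤ n - N := by rw [sub_nonneg]; exact_mod_cast hn
  rw [div_le_iff₀ (by positivity)]
  nlinarith [h.norm_le_add_mul hn, norm_nonneg (q N), norm_nonneg (q (N + 1) - q N)]

theorem exists_norm_le_mul : ∃ M, ∀ n, ‖q n‖ ≤ M * (n + 1) := by
  obtain ⟨N, hN⟩ := exists_tailSum_le (fun k : ℕ => ((k : ℝ) + 1) * v k) (δ := 1 / 12) (by norm_num)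
  have hlate : ∀ n, N ≤ n → ‖q n‖ / (n + 1) ≤ (‖q N‖ + ‖q (N + 1) - q N‖) / (1 - 1 / 2) :=
    le_div_one_sub_of_forall_le_add_mul (by positivity) (by norm_num)
      fun _ hn _ hC hwin => h.norm_div_succ_le_of_window hN hn hC hwin
  obtain ⟨M, hM⟩ := (isBoundedUnder_of_eventually_le (eventually_atTop.2 ⟨N, hlate⟩)).bddAbove_range
  exact ⟨M, fun n => (div_le_iff₀ (by positivity)).1 (hM ⟨n, rfl⟩)⟩

theorem summable_norm : Summable fun k => ‖c k‖ := by
  obtain ⟨M, hM⟩ := h.exists_norm_le_mul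
  have hM0 : 0 ≤ M := by simpa using (norm_nonneg _).trans (hM 0)
  refine .of_nonneg_of_le (fun _ => norm_nonneg _) (fun k => ?_)
    (h.summable_moment.mul_left (6 * M))
  simpa using h.norm_le_of_window (k := k) (B := 0) hM0 fun l _ _ => by rw [zero_add]; exact hM l

variable [CompleteSpace E] (hres : d + ∑' k, c k = 0)
include hres

theorem sub_eq_neg_tailSum (n : ℕ) : q (n + 1) - q n = -tailSum c n := by
  have hc : Summable c := h.summable_norm.of_norm
  rw [h.sub_eq, eq_neg_iff_add_eq_zero, add_assoc, sum_range_add_tailSum hc, hres]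

theorem norm_le_add_sum_norm_tailSum {N n : ℕ} (hn : N ≤ n) :
    ‖q n‖ ≤ ‖q N‖ + ∑ j ∈ Ico N n, ‖tailSum c j‖ := by
  have htelescope : q n - q N = -∑ j ∈ Ico N n, tailSum c j := by
    rw [← sum_Ico_sub _ hn, ← sum_neg_distrib]
    exact sum_congr rfl fun j _ => h.sub_eq_neg_tailSum hres j
  calc ‖q n‖ ≤ ‖q N‖ + ‖q n - q N‖ := norm_le_norm_add_norm_sub' (q n) (q N)
    _ ≤ ‖q N‖ + ∑ j ∈ Ico N n, ‖tailSum c j‖ := by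
        rw [htelescope, norm_neg]
        gcongr
        exact norm_sum_le _ _

theorem norm_le_of_norm_le_affine {N : ℕ}
    (hN : tailSum (fun k : ℕ => ((k : ℝ) + 1) * v k) N ≤ 1 / 12) {B t : ℝ} (hB : 0 ≤ B)
    (ht : 0 ≤ t) (hq : ∀ l, N ≤ l → ‖q l‖ ≤ B + t * (l + 1)) {n : ℕ} (hn : N ≤ n) :
    ‖q n‖ ≤ ‖q N‖ + B / 4 + t / 2 * (n + 1) := by
  have hv := h.summable_moment
  have hv_le : ∀ k : ℕ, v k ≤ ((k : ℝ) + 1) * v k := fun k => by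
    nlinarith [h.nonneg k, k.cast_nonneg (α := ℝ)]
  have hv₀ : Summable v := .of_nonneg_of_le h.nonneg hv_le hv
  have htail : ∀ j ∈ Ico N n, ‖tailSum c j‖ ≤
      3 * B * tailSum v j + 6 * t * tailSum (fun k : ℕ => ((k : ℝ) + 1) * v k) j := by
    intro j hj
    rw [mem_Ico] at hj
    rw [← tailSum_const_mul, ← tailSum_const_mul, ← tailSum_add (hv₀.mul_left _) (hv.mul_left _)]
    exact norm_tailSum_le ((hv₀.mul_left _).add (hv.mul_left _)) fun k hk =>
      h.norm_le_of_window ht fun l hl _ => hq l (by omega)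
  have hsum_v : ∑ j ∈ Ico N n, tailSum v j ≤ 1 / 12 :=
    (sum_Ico_tailSum_le h.nonneg hv hn).trans hN
  have hsum_w : ∑ j ∈ Ico N n, tailSum (fun k : ℕ => ((k : ℝ) + 1) * v k) j ≤ (n + 1) * (1 / 12) :=
    calc _ ≤ ∑ _j ∈ Ico N n, (1 / 12 : ℝ) :=
          sum_le_sum fun j hj => (tailSum_antitone h.moment_nonneg hv (mem_Ico.1 hj).1).trans hN
      _ ≤ (n + 1) * (1 / 12) := by
          rw [sum_const, Nat.card_Ico, nsmul_eq_mul]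
          gcongr
          exact (Nat.cast_le.2 (Nat.sub_le n N)).trans (by simp)
  calc ‖q n‖ ≤ ‖q N‖ + ∑ j ∈ Ico N n, ‖tailSum c j‖ := h.norm_le_add_sum_norm_tailSum hres hn
    _ ≤ ‖q N‖ + (3 * B * ∑ j ∈ Ico N n, tailSum v j
          + 6 * t * ∑ j ∈ Ico N n, tailSum (fun k : ℕ => ((k : ℝ) + 1) * v k) j) := by
        rw [mul_sum, mul_sum, ← sum_add_distrib]
        gcongr with j hj
        exact htail j hj
    _ ≤ ‖q N‖ + B / 4 + t / 2 * (n + 1) := by nlinarith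

theorem exists_norm_le : ∃ B, ∀ n, ‖q n‖ ≤ B := by
  obtain ⟨M, hM⟩ := h.exists_norm_le_mul
  have hM0 : 0 ≤ M := by simpa using (norm_nonneg _).trans (hM 0)
  obtain ⟨N, hN⟩ := exists_tailSum_le (fun k : ℕ => ((k : ℝ) + 1) * v k) (δ := 1 / 12) (by norm_num)
  have hB : 0 ≤ 2 * ‖q N‖ := by positivity
  have hlate : ∀ l : Set.Ici N, ‖q l‖ ≤ 2 * ‖q N‖ :=
    le_of_forall_le_add_mul_of_halving (x := fun l : Set.Ici N => ‖q l‖)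
      (w := fun l => (l : ℝ) + 1) hM0 (fun l => le_add_of_nonneg_of_le hB (hM l))
      fun t ht hq l => by
        have := h.norm_le_of_norm_le_affine hres hN hB ht (fun l hl => hq ⟨l, hl⟩) l.2
        linarith
  obtain ⟨B, hB⟩ := (isBoundedUnder_of_eventually_le (f := atTop) (u := fun n => ‖q n‖)
    (eventually_atTop.2 ⟨N, fun n hn => hlate ⟨n, hn⟩⟩)).bddAbove_range
  exact ⟨B, fun n => hB ⟨n, rfl⟩⟩

theorem summable_moment_norm : Summable fun k : ℕ => ((k : ℝ) + 1) * ‖c k‖ := by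
  obtain ⟨B, hB⟩ := h.exists_norm_le hres
  have hc : ∀ k, ‖c k‖ ≤ 3 * B * v k := fun k => by
    simpa using h.norm_le_of_window (k := k) (t := 0) le_rfl fun l _ _ => by simpa using hB l
  refine .of_nonneg_of_le (fun k => by positivity) (fun k => ?_)
    (h.summable_moment.mul_left (3 * B))
  calc ((k : ℝ) + 1) * ‖c k‖ ≤ ((k : ℝ) + 1) * (3 * B * v k) := by gcongr; exact hc k
    _ = 3 * B * (((k : ℝ) + 1) * v k) := by ring

theorem eq_sub_add_momentTail (n : ℕ) : q n = q 0 - ∑' k, k • c k + momentTail c n := by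
  have hmom := h.summable_moment_norm hres
  induction n with
  | zero => rw [momentTail_zero hmom, sub_add_cancel]
  | succ n ih =>
    rw [← sub_add_cancel (q (n + 1)) (q n), h.sub_eq_neg_tailSum hres, ih,
      momentTail_eq_add hmom n]
    abel

theorem tendsto_sub_tsum : Tendsto q atTop (𝓝 (q 0 - ∑' k, k • c k)) := by
  have := (tendsto_const_nhds (x := q 0 - ∑' k, k • c k)).add
    (tendsto_momentTail (h.summable_moment_norm hres))
  rw [add_zero] at this
  exact this.congr fun n => (h.eq_sub_add_momentTail hres n).symm

theorem eventually_eq_zero (hlim : q 0 - ∑' k, k • c k = 0) : ∃ N, ∀ n, N ≤ n → q n = 0 := by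
  obtain ⟨B, hB⟩ := h.exists_norm_le hres
  have hB0 : 0 ≤ B := (norm_nonneg _).trans (hB 0)
  obtain ⟨N, hN⟩ := exists_tailSum_le (fun k : ℕ => ((k : ℝ) + 1) * v k) (δ := 1 / 12) (by norm_num)
  refine ⟨N, fun n hn => norm_le_zero_iff.1 ?_⟩
  refine le_of_forall_le_add_mul_of_halving (x := fun l : Set.Ici N => ‖q l‖) (w := fun _ => 1)
    (B := 0) hB0 (fun l => by simpa using hB l) (fun t ht hq l => ?_) ⟨n, hn⟩
  simp only [zero_add, mul_one] at hq ⊢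
  have hc : ∀ k, (l : ℕ) < k → ‖c k‖ ≤ 3 * t * v k := fun k hk => by
    simpa using h.norm_le_of_window (k := k) (t := 0) le_rfl fun l' hl' _ => by
      simpa using hq ⟨l', Set.mem_Ici.2 ((Set.mem_Ici.1 l.2).trans (by omega))⟩
  calc ‖q l‖ = ‖momentTail c l‖ := by rw [h.eq_sub_add_momentTail hres, hlim, zero_add]
    _ ≤ tailSum (fun k : ℕ => ((k : ℝ) + 1) * (3 * t * v k)) l := norm_momentTail_le
        (by simpa only [mul_left_comm] using h.summable_moment.mul_left (3 * t)) hc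
    _ = 3 * t * tailSum (fun k : ℕ => ((k : ℝ) + 1) * v k) l := by
        simp only [mul_left_comm _ (3 * t), tailSum_const_mul]
    _ ≤ 3 * t * (1 / 12) := by
        gcongr
        exact (tailSum_antitone h.moment_nonneg h.summable_moment l.2).trans hN
    _ ≤ t / 2 := by linarith

end IsAlmostLinear

namespace IsJacobiSol

variable {a b : ℕ → ℝ} {z : ℂ} {u : ℤ → ℂ}

theorem succ_add_pred (hu : IsJacobiSol a b z u) (n : ℕ) :
    u (n + 1) + u (n - 1) = 2 * z * u n - 2 * jV a b u n := by
  have := hu n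
  simp only [jV]
  push_cast
  linear_combination 2 * this

theorem eq_zero_of_succ_eq_zero (ha : ∀ n, 0 < a n) (hu : IsJacobiSol a b z u) {n : ℕ}
    (h₁ : u (n + 1) = 0) (h₂ : u (n + 2) = 0) : u n = 0 := by
  have := hu (n + 1)
  have haext : aext a n = a n := by simp [aext]
  push_cast at this
  rw [add_sub_cancel_right, add_assoc (n : ℤ) 1 1, one_add_one_eq_two, h₁, h₂, haext] at this
  simpa [(ha n).ne'] using this

theorem eq_zero_of_eventually_eq_zero (ha : ∀ n, 0 < a n) (hu : IsJacobiSol a b z u) {N : ℕ}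
    (hN : ∀ n : ℕ, N ≤ n → u n = 0) (n : ℕ) : u n = 0 := by
  suffices ∀ i n : ℕ, N ≤ n + i → u n = 0 from this N n (by omega)
  intro i
  induction i with
  | zero => exact hN
  | succ i ih =>
    intro n hn
    rcases le_or_gt N (n + i) with h | h
    · exact ih n h
    · exact hu.eq_zero_of_succ_eq_zero ha (by exact_mod_cast ih (n + 1) (by omega))
        (by exact_mod_cast ih (n + 2) (by omega))

end IsJacobiSol

theorem norm_jV_le (a b : ℕ → ℝ) (f : ℤ → ℂ) (m : ℕ) :
    ‖jV a b f m‖ ≤ (|aext a (m - 1) - 1 / 2| + |b m| + |a m - 1 / 2|) *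
      (‖f (m - 1)‖ + ‖f m‖ + ‖f (m + 1)‖) := by
  have hα := abs_nonneg (aext a (m - 1) - 1 / 2)
  have hβ := abs_nonneg (b m)
  have hγ := abs_nonneg (a m - 1 / 2)
  have h₁ := norm_nonneg (f (m - 1))
  have h₂ := norm_nonneg (f m)
  have h₃ := norm_nonneg (f (m + 1))
  calc ‖jV a b f m‖ ≤ |aext a (m - 1) - 1 / 2| * ‖f (m - 1)‖ + |b m| * ‖f m‖
        + |a m - 1 / 2| * ‖f (m + 1)‖ := by
        refine (norm_add₃_le ..).trans ?_
        simp only [norm_mul, Complex.norm_real, Real.norm_eq_abs, le_refl]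
    _ ≤ _ := by nlinarith [mul_nonneg hα h₂, mul_nonneg hα h₃, mul_nonneg hβ h₁, mul_nonneg hβ h₃,
        mul_nonneg hγ h₁, mul_nonneg hγ h₂]

theorem summable_moment_jacobi_perturbation {a b : ℕ → ℝ}
    (hm : Summable fun n : ℕ => ((n : ℝ) + 1) * (|a n - 1 / 2| + |b n|)) :
    Summable fun k : ℕ =>
      ((k : ℝ) + 1) * (2 * (|aext a (k - 1) - 1 / 2| + |b k| + |a k - 1 / 2|)) := by
  have hshift : Summable fun k : ℕ => ((k : ℝ) + 1) * |aext a (k - 1) - 1 / 2| := by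
    refine (summable_nat_add_iff 1).1 (.of_nonneg_of_le (fun _ => by positivity) (fun j => ?_)
      (hm.mul_left 2))
    have : aext a ((j + 1 : ℕ) - 1) = a j := by simp [aext]
    rw [this]
    push_cast
    nlinarith [abs_nonneg (a j - 1 / 2), abs_nonneg (b j), j.cast_nonneg (α := ℝ)]
  refine ((hshift.mul_left 2).add (hm.mul_left 2)).congr fun k => ?_
  ring

section EdgeSequence

variable {a b : ℕ → ℝ} {ε : ℂ} {P : ℤ → ℂ}

theorem sub_eq_one_add_sum (hε : ε ^ 2 = 1) (hP : IsJacobiSol a b ε P) (hPm : P (-1) = 0)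
    (hP0 : P 0 = 1) (n : ℕ) :
    ε ^ (n + 1) * P (n + 1 : ℕ) - ε ^ n * P n
      = 1 + ∑ k ∈ range (n + 1), -2 * ε ^ (k + 1) * jV a b P k := by
  induction n with
  | zero =>
    have h := hP.succ_add_pred 0
    simp only [Nat.cast_zero, zero_add, zero_sub, hPm, hP0] at h
    simp only [zero_add, pow_one, pow_zero, Nat.cast_one, Nat.cast_zero, hP0, sum_range_one]
    linear_combination ε * h + 2 * hε
  | succ n ih =>
    have h := hP.succ_add_pred (n + 1)
    push_cast at h ih ⊢
    rw [add_sub_cancel_right] at h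
    rw [sum_range_succ]
    linear_combination ih + ε ^ (n + 2) * h - ε ^ n * P n * hε + 2 * ε ^ (n + 1) * P (n + 1) * hε

theorem isAlmostLinear_of_isJacobiSol
    (hm : Summable fun n : ℕ => ((n : ℝ) + 1) * (|a n - 1 / 2| + |b n|)) (hε : ε ^ 2 = 1)
    (hP : IsJacobiSol a b ε P) (hPm : P (-1) = 0) (hP0 : P 0 = 1) :
    IsAlmostLinear (fun n : ℕ => ε ^ n * P n) (fun n => -2 * ε ^ (n + 1) * jV a b P n)
      (fun n => 2 * (|aext a (n - 1) - 1 / 2| + |b n| + |a n - 1 / 2|)) 1 where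
  nonneg k := by positivity
  summable_moment := summable_moment_jacobi_perturbation hm
  norm_le k := by
    have hε1 : ‖ε‖ = 1 := by
      rw [← pow_left_inj₀ (norm_nonneg ε) zero_le_one two_ne_zero, ← norm_pow, hε, norm_one,
        one_pow]
    have hprev : ‖P ((k : ℤ) - 1)‖ ≤ ‖P ((k - 1 : ℕ) : ℤ)‖ := by
      rcases k with _ | k
      · simp [hPm]
      · simp
    simp only [norm_mul, norm_neg, norm_pow, hε1, one_pow, one_mul, mul_one, Complex.norm_ofNat]
    calc 2 * ‖jV a b P k‖
        ≤ 2 * ((|aext a (k - 1) - 1 / 2| + |b k| + |a k - 1 / 2|) *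
          (‖P (k - 1)‖ + ‖P k‖ + ‖P (k + 1)‖)) := by gcongr; exact norm_jV_le a b P k
      _ ≤ 2 * ((|aext a (k - 1) - 1 / 2| + |b k| + |a k - 1 / 2|) *
          (‖P ((k - 1 : ℕ) : ℤ)‖ + ‖P k‖ + ‖P ((k + 1 : ℕ) : ℤ)‖)) := by push_cast; gcongr
      _ = _ := by ring
  sub_eq := sub_eq_one_add_sum hε hP hPm hP0

end EdgeSequence

theorem zpow_sub_one_eq_pow_succ {ε : ℂ} (hε : ε ^ 2 = 1) (m : ℕ) :
    ε ^ ((m : ℤ) - 1) = ε ^ (m + 1) := by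
  have hε0 : ε ≠ 0 := by rintro rfl; norm_num at hε
  have h := zpow_add₀ hε0 ((m : ℤ) - 1) 2
  rw [zpow_ofNat, hε, mul_one, sub_add_eq_add_sub, add_sub_assoc] at h
  rw [← h]
  exact_mod_cast zpow_natCast ε (m + 1)

/-- in the resonant case `Ω(ε) = 0` at an edge point `ε = ±1`, the
sequence `εⁿ P_n(ε)` converges to the nonzero limit
`γ_ε = 1 + 2 ∑_{m≥0} ε^{m-1} m (VP(ε))_m`. -/
theorem edge_asymptotics_resonant
    (a b : ℕ → ℝ) (ha : ∀ n, 0 < a n)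
    (hm : Summable (fun n : ℕ => ((n : ℝ) + 1) * (|a n - 1/2| + |b n|)))
    (ε : ℝ) (hε : ε = 1 ∨ ε = -1)
    (P : ℤ → ℂ) (hP : IsJacobiSol a b (ε : ℂ) P) (hPm : P (-1) = 0) (hP0 : P 0 = 1)
    (hres : (1 : ℂ) - 2 * ∑' n : ℕ, (ε : ℂ) ^ (n + 1) * jV a b P n = 0)
    (γ : ℂ) (hγ : γ = 1 + 2 * ∑' m : ℕ, (ε : ℂ) ^ ((m : ℤ) - 1) * (m : ℂ) * jV a b P m) :
    γ ≠ 0 ∧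
    Filter.Tendsto (fun n : ℕ => (ε : ℂ) ^ (n : ℕ) * P (n : ℤ)) Filter.atTop (nhds γ) := by
  have hε2 : (ε : ℂ) ^ 2 = 1 := by rcases hε with rfl | rfl <;> norm_num
  have hε0 : (ε : ℂ) ≠ 0 := by rcases hε with rfl | rfl <;> norm_num
  have h := isAlmostLinear_of_isJacobiSol hm hε2 hP hPm hP0
  have hres' : 1 + ∑' k : ℕ, -2 * (ε : ℂ) ^ (k + 1) * jV a b P k = 0 := by
    simp only [mul_assoc, tsum_mul_left]
    linear_combination hres
  have hγ' : γ = (ε : ℂ) ^ 0 * P (0 : ℕ) - ∑' k : ℕ, k • (-2 * (ε : ℂ) ^ (k + 1) * jV a b P k) := by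
    simp only [hγ, zpow_sub_one_eq_pow_succ hε2, nsmul_eq_mul, pow_zero, one_mul, Nat.cast_zero,
      hP0]
    rw [sub_eq_add_neg, ← tsum_neg, ← tsum_mul_left]
    congr 2
    exact funext fun m => by ring
  rw [hγ']
  refine ⟨fun hγ0 => ?_, h.tendsto_sub_tsum hres'⟩
  obtain ⟨N, hN⟩ := h.eventually_eq_zero hres' hγ0
  have hPtail : ∀ n : ℕ, N ≤ n → P n = 0 := fun n hn =>
    (mul_eq_zero.1 (hN n hn)).resolve_left (pow_ne_zero _ hε0)
  simpa [hP0] using hP.eq_zero_of_eventually_eq_zero ha hPtail 0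
end
end
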